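/- The partial order T(B(·)) is order-isomorphic to the partial order (T̄₂, ≤_gap) of structured finite rooted trees with labels in {0,1} under the weak gap-embeddability relation. -/

import Mathlib

universe u

/-- Finite planar binary trees with leaf labels in `X`. -/
inductive BTree (X : Type u) : Type u
  | leaf : X → BTree X
  | node : BTree X → BTree X → BTree X

/-- Homeomorphic embeddability of leaf-labeled binary trees. -/
inductive BTreeLE {X : Type u} (le : X → X → Prop) : BTree X → BTree X → Prop
  | leaf {x y : X} : le x y → BTreeLE le (BTree.leaf x) (BTree.leaf y)
  | left {s t₁ t₂ : BTree X} : BTreeLE le s t₁ → BTreeLE le s (BTree.node t₁ t₂)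
  | right {s t₁ t₂ : BTree X} : BTreeLE le s t₂ → BTreeLE le s (BTree.node t₁ t₂)
  | node {s₁ s₂ t₁ t₂ : BTree X} : BTreeLE le s₁ t₁ → BTreeLE le s₂ t₂ →
      BTreeLE le (BTree.node s₁ s₂) (BTree.node t₁ t₂)

/-- The terms of `T(B(·))`: either the constant `◦`, or `◦[B]` for a finite planar
binary tree `B` with leaf labels that are themselves terms. -/
inductive TB : Type
  | circ : TB
  | node : BTree TB → TB

/-- The list of leaf labels of a binary tree. -/
def BTree.leaves {X : Type u} : BTree X → List X
  | BTree.leaf x => [x]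
  | BTree.node t₁ t₂ => t₁.leaves ++ t₂.leaves

/-- The ordering on `T(B(·))`: the least reflexive and transitive relation `R` such that
`◦ R t` for all `t`; `s R ◦[B]` whenever `s R t` for some leaf label `t` of `B`; and
`◦[B] R ◦[B']` whenever `B` embeds into `B'` in `B(T(B(·)))` (computed with `R` on the
leaf labels). -/
def TBle (s t : TB) : Prop :=
  ∀ R : TB → TB → Prop,
    Reflexive R → Transitive R →
    (∀ u : TB, R TB.circ u) →
    (∀ (u : TB) (B : BTree TB) (v : TB), v ∈ B.leaves → R u v → R u (TB.node B)) →
    (∀ B B' : BTree TB, BTreeLE R B B' → R (TB.node B) (TB.node B')) →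
    R s t

/-- Finite rooted structured (planar) trees with labels in `Fin 2 = {0,1}`. -/
inductive LTree : Type
  | node : Fin 2 → List LTree → LTree

/-- The label of the root of a tree. -/
def LTree.root : LTree → Fin 2
  | LTree.node a _ => a

mutual
  /-- `GEmb T T'`: there is a weak-gap embedding of `T` into `T'` sending the root of
  `T` to the root of `T'` (so the root labels agree and the forests of immediate
  subtrees embed, respecting the left-right order). -/
  inductive GEmb : LTree → LTree → Prop
    | node {a : Fin 2} {ts ts' : List LTree} :
        GForest ts ts' → GEmb (LTree.node a ts) (LTree.node a ts')

  /-- `GForest ts ts'`: the forest `ts` embeds into the forest `ts'`, sending distinct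
  trees of `ts` into distinct trees of `ts'` in the left-right order; each tree `t` is
  embedded with the gap condition for the label of its root. -/
  inductive GForest : List LTree → List LTree → Prop
    | nil : GForest [] []
    | skip {ts : List LTree} {c : LTree} {ts' : List LTree} :
        GForest ts ts' → GForest ts (c :: ts')
    | cons {t : LTree} {ts : List LTree} {c : LTree} {ts' : List LTree} :
        GGap t.root t c → GForest ts ts' → GForest (t :: ts) (c :: ts')

  /-- `GGap m T T'`: there is a weak-gap embedding of `T` into `T'` sending the root of
  `T` to some node `v` of `T'` such that every node of `T'` strictly above `v` has label
  `≥ m` (this is the gap condition for an edge whose lower endpoint has label `m`). -/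
  inductive GGap : Fin 2 → LTree → LTree → Prop
    | here {m : Fin 2} {T T' : LTree} : GEmb T T' → GGap m T T'
    | deeper {m b : Fin 2} {T : LTree} {cs : List LTree} {c : LTree} :
        m ≤ b → c ∈ cs → GGap m T c → GGap m T (LTree.node b cs)
end

/-- Trees of `T̄₂`: every node with label `0` has at most one immediate successor and
every node with label `1` has exactly two. -/
inductive OkT2 : LTree → Prop
  | zero_nil : OkT2 (LTree.node 0 [])
  | zero_one {t : LTree} : OkT2 t → OkT2 (LTree.node 0 [t])
  | one_two {t₁ t₂ : LTree} : OkT2 t₁ → OkT2 t₂ → OkT2 (LTree.node 1 [t₁, t₂])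

/-- The set `T̄₂`: structured finite rooted `{0,1}`-labeled trees whose root is labeled
`0`, label-`0` nodes have at most one child and label-`1` nodes exactly two. -/
def TBar2 : Type := {T : LTree // OkT2 T ∧ T.root = 0}

/-- The weak gap-embeddability relation on `T̄₂` (no constraint above the image of the
root, hence gap bound `0`). -/
def gapLE (s t : TBar2) : Prop := GGap 0 s.1 t.1

/-! Encode `◦` as a single `0`-node, `◦[B]` as a `0`-node whose only child encodes `B`, and a
binary tree `B` by turning its inner nodes into `1`-nodes and each leaf `t` into the encoding
of `t`. This is a bijection onto `T̄₂`. Under the gap condition a `1`-node can only be mapped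
below `1`-nodes, so an encoded binary tree embeds into another one exactly when it does so
homeomorphically; a `0`-rooted tree (a term) may in addition slide down into any leaf term of
the target. Hence the pulled-back gap order satisfies the closure rules defining `TBle`, and
conversely, by induction on the target, it is contained in `TBle`. -/

mutual
theorem GEmb.refl : ∀ T : LTree, GEmb T T
  | .node _ ts => .node (GForest.refl ts)
theorem GForest.refl : ∀ ts : List LTree, GForest ts ts
  | [] => .nil
  | t :: ts => .cons (.here (GEmb.refl t)) (GForest.refl ts)
end

theorem GEmb.root_eq {T T' : LTree} : GEmb T T' → T.root = T'.root
  | .node _ => rfl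

theorem GGap.root_le {m : Fin 2} {T T' : LTree} (hm : m ≤ T.root) : GGap m T T' → m ≤ T'.root
  | .here e => e.root_eq ▸ hm
  | .deeper hb _ _ => hb

theorem GForest.exists_mem {c : LTree} : ∀ {ts ts' : List LTree}, GForest ts ts' → c ∈ ts →
    ∃ c' ∈ ts', GGap c.root c c'
  | _, _, .skip h, hc =>
    let ⟨c', hc', g⟩ := h.exists_mem hc
    ⟨c', List.mem_cons_of_mem _ hc', g⟩
  | _, _, .cons g h, hc => by
    rcases List.mem_cons.1 hc with rfl | hc
    · exact ⟨_, List.mem_cons_self, g⟩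
    · obtain ⟨c', hc', g⟩ := h.exists_mem hc
      exact ⟨c', List.mem_cons_of_mem _ hc', g⟩

-- Recursion on the size of `T''`; the second component of the measure orders the calls of
-- `GGap.trans` to `GEmb.trans` at the same `T''`.
mutual
theorem GEmb.trans {T T' T'' : LTree} : GEmb T T' → GEmb T' T'' → GEmb T T''
  | .node h, .node h' => .node (GForest.trans h h')
termination_by (sizeOf T'', 0)
theorem GForest.trans {ts ts' ts'' : List LTree} :
    GForest ts ts' → GForest ts' ts'' → GForest ts ts''
  | h, .nil => h
  | h, .skip h' => .skip (GForest.trans h h')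
  | .skip h, .cons _ h' => .skip (GForest.trans h h')
  | .cons g h, .cons g' h' => .cons (GGap.trans (g.root_le le_rfl) le_rfl g g') (GForest.trans h h')
termination_by (sizeOf ts'', 0)
theorem GGap.trans {m m' : Fin 2} {T T' T'' : LTree} (hm : m ≤ m') (hmT : m ≤ T.root) :
    GGap m T T' → GGap m' T' T'' → GGap m T T''
  | h, .deeper hb hc h' => .deeper (hm.trans hb) hc (GGap.trans hm hmT h h')
  | .here e, .here e' => .here (GEmb.trans e e')
  | .deeper hb hc h, .here (.node f) =>
      let ⟨_, hc'', g⟩ := f.exists_mem hc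
      .deeper hb hc'' (GGap.trans (h.root_le hmT) hmT h g)
termination_by (sizeOf T'', 1)
end

theorem GForest.nil_left : ∀ ts : List LTree, GForest [] ts
  | [] => .nil
  | _ :: ts => .skip (GForest.nil_left ts)

theorem gEmb_node_iff {a b : Fin 2} {ts ts' : List LTree} :
    GEmb (.node a ts) (.node b ts') ↔ a = b ∧ GForest ts ts' :=
  ⟨fun | .node h => ⟨rfl, h⟩, fun ⟨rfl, h⟩ => .node h⟩

theorem gForest_nil_right_iff {ts : List LTree} : GForest ts [] ↔ ts = [] :=
  ⟨fun | .nil => rfl, fun h => h ▸ .nil⟩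

theorem gForest_cons_cons_iff {t c : LTree} {ts cs : List LTree} :
    GForest (t :: ts) (c :: cs) ↔ GForest (t :: ts) cs ∨ GGap t.root t c ∧ GForest ts cs :=
  ⟨fun | .skip h => .inl h | .cons g h => .inr ⟨g, h⟩,
   fun | .inl h => .skip h | .inr ⟨g, h⟩ => .cons g h⟩

theorem gGap_node_iff {m b : Fin 2} {T : LTree} {cs : List LTree} :
    GGap m T (.node b cs) ↔ GEmb T (.node b cs) ∨ m ≤ b ∧ ∃ c ∈ cs, GGap m T c :=
  ⟨fun | .here e => .inl e | .deeper hb hc g => .inr ⟨hb, _, hc, g⟩,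
   fun | .inl e => .here e | .inr ⟨hb, _, hc, g⟩ => .deeper hb hc g⟩

theorem BTreeLE.mono_of_mem_leaves {X : Type u} {le le' : X → X → Prop} {B B' : BTree X}
    (h : ∀ x, ∀ y ∈ B'.leaves, le x y → le' x y) (hB : BTreeLE le B B') : BTreeLE le' B B' := by
  induction hB with
  | leaf hxy => exact .leaf (h _ _ (by simp [BTree.leaves]) hxy)
  | left _ ih => exact .left (ih fun x y hy => h x y (by simp [BTree.leaves, hy]))
  | right _ ih => exact .right (ih fun x y hy => h x y (by simp [BTree.leaves, hy]))
  | node _ _ ih₁ ih₂ =>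
    exact .node (ih₁ fun x y hy => h x y (by simp [BTree.leaves, hy]))
      (ih₂ fun x y hy => h x y (by simp [BTree.leaves, hy]))

theorem bTreeLE_leaf_left_iff {X : Type u} {le : X → X → Prop} {x : X} {B : BTree X} :
    BTreeLE le (.leaf x) B ↔ ∃ y ∈ B.leaves, le x y := by
  induction B with
  | leaf y =>
    simp only [BTree.leaves, List.mem_singleton, exists_eq_left]
    exact ⟨fun | .leaf h => h, .leaf⟩
  | node L R ihL ihR =>
    refine ⟨fun | .left h => ?_ | .right h => ?_, fun ⟨y, hy, h⟩ => ?_⟩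
    · obtain ⟨y, hy, h⟩ := ihL.1 h; exact ⟨y, by simp [BTree.leaves, hy], h⟩
    · obtain ⟨y, hy, h⟩ := ihR.1 h; exact ⟨y, by simp [BTree.leaves, hy], h⟩
    · rcases List.mem_append.1 hy with hy | hy
      · exact .left (ihL.2 ⟨y, hy, h⟩)
      · exact .right (ihR.2 ⟨y, hy, h⟩)

theorem TBle.refl (t : TB) : TBle t t := fun _ hR _ _ _ _ => hR t

theorem TBle.circ_le (t : TB) : TBle .circ t := fun _ _ _ hc _ _ => hc t

theorem TBle.le_node_of_mem_leaves {s v : TB} {B : BTree TB} (hv : v ∈ B.leaves)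
    (h : TBle s v) : TBle s (.node B) :=
  fun R hR hR' hc hl hn => hl s B v hv (h R hR hR' hc hl hn)

theorem TBle.node_le_node {B B' : BTree TB} (h : BTreeLE TBle B B') :
    TBle (.node B) (.node B') :=
  fun R hR hR' hc hl hn => hn B B' (h.mono_of_mem_leaves fun _ _ _ hxy => hxy R hR hR' hc hl hn)

mutual
def enc : TB → LTree
  | .circ => .node 0 []
  | .node B => .node 0 [encB B]
def encB : BTree TB → LTree
  | .leaf t => enc t
  | .node L R => .node 1 [encB L, encB R]
end

@[simp]
theorem LTree.root_node (a : Fin 2) (ts : List LTree) : (LTree.node a ts).root = a := rfl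

@[simp]
theorem enc_root (t : TB) : (enc t).root = 0 := by
  cases t <;> rfl

mutual
theorem okT2_enc : ∀ t : TB, OkT2 (enc t)
  | .circ => .zero_nil
  | .node B => .zero_one (okT2_encB B)
theorem okT2_encB : ∀ B : BTree TB, OkT2 (encB B)
  | .leaf t => okT2_enc t
  | .node L R => .one_two (okT2_encB L) (okT2_encB R)
end

mutual
theorem eq_of_enc_eq : ∀ {s t : TB}, enc s = enc t → s = t
  | .circ, .circ, _ => rfl
  | .node _, .node _, h => by
    simp only [enc, LTree.node.injEq, List.cons.injEq, and_true, true_and] at h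
    rw [eq_of_encB_eq h]
  | .circ, .node _, h | .node _, .circ, h => by simp [enc] at h
theorem eq_of_encB_eq : ∀ {B B' : BTree TB}, encB B = encB B' → B = B'
  | .leaf _, .leaf _, h => by rw [eq_of_enc_eq h]
  | .node _ _, .node _ _, h => by
    simp only [encB, LTree.node.injEq, List.cons.injEq, and_true, true_and] at h
    rw [eq_of_encB_eq h.1, eq_of_encB_eq h.2]
  | .leaf x, .node _ _, h | .node _ _, .leaf x, h => by
    simpa [encB] using congrArg LTree.root h
end

theorem enc_injective : Function.Injective enc := fun _ _ => eq_of_enc_eq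

theorem OkT2.exists_encB {T : LTree} (hT : OkT2 T) : ∃ B, encB B = T := by
  induction hT with
  | zero_nil => exact ⟨.leaf .circ, rfl⟩
  | zero_one _ ih => obtain ⟨B, rfl⟩ := ih; exact ⟨.leaf (.node B), rfl⟩
  | one_two _ _ ih₁ ih₂ =>
    obtain ⟨B₁, rfl⟩ := ih₁; obtain ⟨B₂, rfl⟩ := ih₂; exact ⟨.node B₁ B₂, rfl⟩

theorem OkT2.exists_enc {T : LTree} (hT : OkT2 T) (h0 : T.root = 0) : ∃ t, enc t = T := by
  obtain ⟨B | ⟨L, R⟩, rfl⟩ := hT.exists_encB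
  · exact ⟨B, rfl⟩
  · simp [encB] at h0

def EncLE (s t : TB) : Prop := GGap 0 (enc s) (enc t)

theorem bTreeLE_of_gGap_encB {B B' : BTree TB} (h : GGap (encB B).root (encB B) (encB B')) :
    BTreeLE EncLE B B' := by
  induction B' generalizing B with
  | leaf y =>
    cases B with
    | leaf x => exact .leaf (by simpa [encB, EncLE] using h)
    | node L R => simpa [encB] using h.root_le le_rfl
  | node L' R' ihL ihR =>
    rw [encB, gGap_node_iff] at h
    rcases h with e | ⟨-, c, hc, g⟩
    · cases B with
      | leaf x => simpa [encB] using e.root_eq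
      | node L R =>
        obtain ⟨gL, gR⟩ : GGap (encB L).root (encB L) (encB L') ∧
            GGap (encB R).root (encB R) (encB R') := by
          simpa [encB, gEmb_node_iff, gForest_cons_cons_iff, gForest_nil_right_iff] using e
        exact .node (ihL gL) (ihR gR)
    · simp only [List.mem_cons, List.not_mem_nil, or_false] at hc
      rcases hc with rfl | rfl
      · exact .left (ihL g)
      · exact .right (ihR g)

theorem gGap_encB_of_bTreeLE {B B' : BTree TB} (h : BTreeLE EncLE B B') :
    GGap (encB B).root (encB B) (encB B') := by
  induction h with
  | leaf h => simpa [encB, EncLE] using h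
  | left _ ih => exact .deeper (Fin.le_last _) (by simp) ih
  | right _ ih => exact .deeper (Fin.le_last _) (by simp) ih
  | node _ _ ih₁ ih₂ => exact .here (.node (.cons ih₁ (.cons ih₂ .nil)))

theorem gGap_encB_iff {B B' : BTree TB} :
    GGap (encB B).root (encB B) (encB B') ↔ BTreeLE EncLE B B' :=
  ⟨bTreeLE_of_gGap_encB, gGap_encB_of_bTreeLE⟩

theorem gGap_enc_encB_iff {s : TB} {B : BTree TB} :
    GGap 0 (enc s) (encB B) ↔ ∃ v ∈ B.leaves, EncLE s v := by
  simpa [encB] using (gGap_encB_iff (B := .leaf s) (B' := B)).trans bTreeLE_leaf_left_iff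

theorem encLE_circ_left (t : TB) : EncLE .circ t := by
  cases t <;> exact .here (.node (GForest.nil_left _))

theorem not_encLE_node_circ (B : BTree TB) : ¬ EncLE (.node B) .circ := by
  simp [EncLE, enc, gGap_node_iff, gEmb_node_iff, gForest_nil_right_iff]

theorem EncLE.trans {s t u : TB} (h₁ : EncLE s t) (h₂ : EncLE t u) : EncLE s u :=
  GGap.trans le_rfl (Fin.zero_le _) h₁ h₂

theorem encLE_node_of_mem_leaves {s v : TB} {B : BTree TB} (hv : v ∈ B.leaves) (h : EncLE s v) :
    EncLE s (.node B) :=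
  .deeper le_rfl (List.mem_singleton_self _) (gGap_enc_encB_iff.2 ⟨v, hv, h⟩)

theorem encLE_node_iff {B B' : BTree TB} :
    EncLE (.node B) (.node B') ↔ BTreeLE EncLE B B' ∨ ∃ v ∈ B'.leaves, EncLE (.node B) v := by
  rw [← gGap_encB_iff, ← gGap_enc_encB_iff]
  simp [EncLE, enc, gGap_node_iff, gEmb_node_iff, gForest_cons_cons_iff, gForest_nil_right_iff]

theorem TBle.encLE {s t : TB} (h : TBle s t) : EncLE s t :=
  h EncLE (fun _ => .here (.refl _)) (fun _ _ _ => .trans) encLE_circ_left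
    (fun _ _ _ => encLE_node_of_mem_leaves) (fun _ _ h => encLE_node_iff.2 (.inl h))

theorem TBle.of_encLE {s t : TB} (h : EncLE s t) : TBle s t := by
  refine TB.rec (motive_1 := fun t => ∀ s, EncLE s t → TBle s t)
    (motive_2 := fun B => ∀ v ∈ B.leaves, ∀ s, EncLE s v → TBle s v)
    ?circ ?node ?leaf ?bnode t s h
  case circ =>
    intro s h
    cases s with
    | circ => exact .refl _
    | node B => exact absurd h (not_encLE_node_circ B)
  case node =>
    intro B' ih s h
    cases s with
    | circ => exact .circ_le _
    | node B =>
      rcases encLE_node_iff.1 h with hB | ⟨v, hv, h⟩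
      · exact .node_le_node (hB.mono_of_mem_leaves fun x y hy => ih y hy x)
      · exact .le_node_of_mem_leaves hv (ih v hv _ h)
  case leaf =>
    simp only [BTree.leaves, List.mem_singleton, forall_eq]
    exact fun _ => id
  case bnode =>
    simp only [BTree.leaves, List.mem_append]
    rintro L R ihL ihR v (hv | hv)
    exacts [ihL v hv, ihR v hv]

/-- `T(B(·))` is order-isomorphic to `(T̄₂, ≤_gap)`. -/
theorem stmt13 :
    ∃ g : TB → TBar2, Function.Bijective g ∧
      ∀ s t : TB, TBle s t ↔ gapLE (g s) (g t) := by
  refine ⟨fun t => ⟨enc t, okT2_enc t, enc_root t⟩, ⟨?_, ?_⟩, fun s t => ⟨TBle.encLE, TBle.of_encLE⟩⟩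
  · exact fun s t h => enc_injective (congrArg Subtype.val h)
  · rintro ⟨T, hT, h0⟩
    obtain ⟨t, rfl⟩ := hT.exists_enc h0
    exact ⟨t, rfl⟩
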